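/- arXiv:2202.09890 — 5 statements merged into one kernel-verified Lean document; each statement's English description precedes it below -/
import Mathlib

section
/- Let M, K, K', U be natural numbers with K' ≤ K ≤ M and U ≥ 1. Suppose U−1 users each independently and uniformly at random choose a K-element subset of an M-element slot set, and a reference user has a fixed K-element subset. Then the probability that exactly K' of the reference user's K slots are avoided by all U−1 other users' subsets equals C(K,K') · ∑_{n=0}^{K−K'} (−1)^n C(K−K', n) · (C(M−K'−n, K)/C(M,K))^{U−1}. -/
open Finset

lemma single_count (M K : ℕ) (A : Finset (Fin M)) :
    Fintype.card {s : {t : Finset (Fin M) // t.card = K} // Disjoint A s.1} =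
      (M - A.card).choose K := by
  rw [Fintype.card_congr (Equiv.subtypeSubtypeEquivSubtypeInter
      (fun t : Finset (Fin M) => t.card = K) (Disjoint A))]
  rw [Fintype.card_subtype]
  have h : (univ.filter fun t : Finset (Fin M) => t.card = K ∧ Disjoint A t)
      = Aᶜ.powersetCard K := by
    ext t
    simp only [mem_filter, mem_univ, true_and, Finset.mem_powersetCard]
    constructor
    · rintro ⟨h1, h2⟩
      refine ⟨fun x hx => Finset.mem_compl.2 fun hxA => ?_, h1⟩
      exact (Finset.disjoint_left.1 h2) hxA hx
    · rintro ⟨h1, h2⟩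
      refine ⟨h2, Finset.disjoint_left.2 fun x hxA hxt => ?_⟩
      exact (Finset.mem_compl.1 (h1 hxt)) hxA
  rw [h, Finset.card_powersetCard, Finset.card_compl, Fintype.card_fin]

lemma count_avoid (M K N : ℕ) (A : Finset (Fin M)) :
    (univ.filter fun f : Fin N → {s : Finset (Fin M) // s.card = K} =>
        ∀ i, Disjoint A (f i).1).card = ((M - A.card).choose K) ^ N := by
  rw [← Fintype.card_subtype]
  rw [Fintype.card_congr (Equiv.subtypePiEquivPi
      (β := fun _ : Fin N => {t : Finset (Fin M) // t.card = K})
      (p := fun _ s => Disjoint A s.1))]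
  simp [single_count]

lemma neg_one_sum {α : Type*} [DecidableEq α] (x : Finset α) :
    ∑ m ∈ x.powerset, (-1:ℝ) ^ m.card = if x = ∅ then 1 else 0 := by
  have h : ∑ m ∈ x.powerset, (-1:ℤ) ^ m.card = if x = ∅ then 1 else 0 :=
    Finset.sum_powerset_neg_one_pow_card
  have h2 : ((∑ m ∈ x.powerset, (-1:ℤ) ^ m.card : ℤ) : ℝ)
      = ∑ m ∈ x.powerset, (-1:ℝ) ^ m.card := by push_cast; rfl
  rw [← h2, h]
  split <;> simp

lemma key (M K K' N : ℕ) (hK' : K' ≤ K) (hK : K ≤ M)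
    (B : Finset (Fin M)) (hB : B.card = K) :
    ((univ.filter
        (fun f : Fin N → {s : Finset (Fin M) // s.card = K} =>
          (B.filter (fun x => ∀ i, x ∉ (f i).1)).card = K')).card : ℝ)
      = (K.choose K' : ℝ) *
        ∑ n ∈ Finset.range (K - K' + 1),
          (-1 : ℝ) ^ n * ((K - K').choose n : ℝ) * (((M - K' - n).choose K : ℝ)) ^ N := by
  set S := {s : Finset (Fin M) // s.card = K}
  set F : (Fin N → S) → Finset (Fin M) :=
    fun f => B.filter (fun x => ∀ i, x ∉ (f i).1) with hF
  have hFB : ∀ f, F f ⊆ B := fun f => filter_subset _ _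
  -- cast card filter into real sum of indicators
  rw [Finset.card_filter]
  push_cast
  -- step 1+2 : per-f identity
  have step : ∀ f : Fin N → S,
      (if (F f).card = K' then (1:ℝ) else 0) =
      ∑ A ∈ B.powersetCard K', ∑ A' ∈ (B \ A).powerset,
        (-1:ℝ) ^ A'.card * (if A ∪ A' ⊆ F f then 1 else 0) := by
    intro f
    have h1 : (if (F f).card = K' then (1:ℝ) else 0)
        = ∑ A ∈ B.powersetCard K', (if F f = A then (1:ℝ) else 0) := by
      rw [Finset.sum_ite_eq]
      simp [Finset.mem_powersetCard, hFB f]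
    rw [h1]
    refine Finset.sum_congr rfl fun A hA => ?_
    rw [Finset.mem_powersetCard] at hA
    by_cases hAF : A ⊆ F f
    · have h2 : ∀ A' ∈ (B \ A).powerset,
          (-1:ℝ) ^ A'.card * (if A ∪ A' ⊆ F f then 1 else 0)
          = (-1:ℝ) ^ A'.card * (if A' ⊆ F f \ A then 1 else 0) := by
        intro A' hA'
        rw [Finset.mem_powerset] at hA'
        congr 1
        congr 1
        rw [Finset.union_subset_iff, Finset.subset_sdiff]
        have hdisj : Disjoint A' A :=
          (Finset.sdiff_disjoint).mono_left hA'
        simp [hAF, hdisj]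
      rw [Finset.sum_congr rfl h2]
      have hsub : (F f \ A).powerset ⊆ (B \ A).powerset :=
        Finset.powerset_mono.2 (Finset.sdiff_subset_sdiff (hFB f) le_rfl)
      rw [← Finset.sum_subset hsub (by
        intro A' _ hA'
        rw [Finset.mem_powerset] at hA'
        simp [hA'])]
      have h3 : ∀ A' ∈ (F f \ A).powerset,
          (-1:ℝ) ^ A'.card * (if A' ⊆ F f \ A then 1 else 0) = (-1:ℝ) ^ A'.card := by
        intro A' hA'
        rw [Finset.mem_powerset] at hA'
        simp [hA']
      rw [Finset.sum_congr rfl h3, neg_one_sum]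
      have hiff2 : (F f = A) ↔ (F f \ A = ∅) := by
        rw [Finset.sdiff_eq_empty_iff_subset]
        exact ⟨fun h => h.le, fun h => Finset.Subset.antisymm h hAF⟩
      exact if_congr hiff2 rfl rfl
    · rw [if_neg (fun h => hAF h.symm.le)]
      symm
      refine Finset.sum_eq_zero fun A' _ => ?_
      rw [if_neg (fun h => hAF ((Finset.subset_union_left).trans h)), mul_zero]
  rw [Finset.sum_congr rfl fun f _ => step f]
  rw [Finset.sum_comm]
  have inner : ∀ A ∈ B.powersetCard K',
      (∑ f : Fin N → S, ∑ A' ∈ (B \ A).powerset,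
        (-1:ℝ) ^ A'.card * (if A ∪ A' ⊆ F f then 1 else 0))
      = ∑ n ∈ Finset.range (K - K' + 1),
          (-1 : ℝ) ^ n * ((K - K').choose n : ℝ) * (((M - K' - n).choose K : ℝ)) ^ N := by
    intro A hA
    rw [Finset.mem_powersetCard] at hA
    rw [Finset.sum_comm]
    have hcount : ∀ A' ∈ (B \ A).powerset,
        (∑ f : Fin N → S, (-1:ℝ) ^ A'.card * (if A ∪ A' ⊆ F f then 1 else 0))
        = (-1:ℝ) ^ A'.card * (((M - K' - A'.card).choose K : ℝ)) ^ N := by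
      intro A' hA'
      rw [Finset.mem_powerset] at hA'
      rw [← Finset.mul_sum]
      congr 1
      have hCB : A ∪ A' ⊆ B :=
        Finset.union_subset hA.1 (hA'.trans (Finset.sdiff_subset))
      have hiff : ∀ f : Fin N → S,
          (A ∪ A' ⊆ F f ↔ ∀ i, Disjoint (A ∪ A') (f i).1) := by
        intro f
        constructor
        · intro h i
          refine Finset.disjoint_left.2 fun x hx hxf => ?_
          exact (Finset.mem_filter.1 (h hx)).2 i hxf
        · intro h x hx
          exact Finset.mem_filter.2 ⟨hCB hx, fun i => Finset.disjoint_left.1 (h i) hx⟩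
      have : (∑ f : Fin N → S, (if A ∪ A' ⊆ F f then (1:ℝ) else 0))
          = ((univ.filter fun f : Fin N → S => ∀ i, Disjoint (A ∪ A') (f i).1).card : ℝ) := by
        rw [Finset.card_filter]
        push_cast
        exact Finset.sum_congr rfl fun f _ => by simp [hiff f]
      rw [this, count_avoid]
      have hdisj : Disjoint A A' := (Finset.disjoint_sdiff).mono_right hA'
      rw [Finset.card_union_of_disjoint hdisj, hA.2, Nat.sub_add_eq, Nat.cast_pow]
    rw [Finset.sum_congr rfl hcount]
    rw [Finset.sum_powerset]
    have hcard : (B \ A).card = K - K' := by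
      rw [Finset.card_sdiff_of_subset hA.1, hB, hA.2]
    rw [hcard]
    refine Finset.sum_congr rfl fun n hn => ?_
    have h4 : ∀ A' ∈ Finset.powersetCard n (B \ A),
        (-1:ℝ) ^ A'.card * (((M - K' - A'.card).choose K : ℝ)) ^ N
        = (-1:ℝ) ^ n * (((M - K' - n).choose K : ℝ)) ^ N := by
      intro A' hA'
      rw [(Finset.mem_powersetCard.1 hA').2]
    rw [Finset.sum_congr rfl h4, Finset.sum_const, Finset.card_powersetCard, hcard,
      nsmul_eq_mul]
    push_cast
    ring
  rw [Finset.sum_congr rfl inner, Finset.sum_const, Finset.card_powersetCard, hB,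
    nsmul_eq_mul]

/-- Each of `U - 1` users independently and uniformly chooses a `K`-subset of an `M`-set.
For a reference user with fixed `K`-set `B`, the probability that exactly `K'` of its
slots are avoided by all other users equals
`C(K,K') ∑_{n=0}^{K-K'} (-1)^n C(K-K',n) (C(M-K'-n,K)/C(M,K))^{U-1}`. -/
theorem stmt_0 (M K K' U : ℕ) (hK' : K' ≤ K) (hK : K ≤ M) (hU : 1 ≤ U)
    (B : Finset (Fin M)) (hB : B.card = K) :
    ((Finset.univ.filter
        (fun f : Fin (U - 1) → {s : Finset (Fin M) // s.card = K} =>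
          (B.filter (fun x => ∀ i, x ∉ (f i).1)).card = K')).card : ℝ) /
      (Fintype.card (Fin (U - 1) → {s : Finset (Fin M) // s.card = K}) : ℝ)
    = (K.choose K' : ℝ) *
        ∑ n ∈ Finset.range (K - K' + 1),
          (-1 : ℝ) ^ n * ((K - K').choose n : ℝ) *
            (((M - K' - n).choose K : ℝ) / (M.choose K : ℝ)) ^ (U - 1) := by
  have hden : (Fintype.card (Fin (U - 1) → {s : Finset (Fin M) // s.card = K}) : ℝ)
      = (M.choose K : ℝ) ^ (U - 1) := by
    rw [Fintype.card_fun, Fintype.card_finset_len, Fintype.card_fin, Fintype.card_fin]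
    push_cast
    rfl
  have hpos : (0:ℝ) < (M.choose K : ℝ) := by exact_mod_cast Nat.choose_pos hK
  rw [key M K K' (U - 1) hK' hK B hB, hden]
  rw [Finset.mul_sum, Finset.mul_sum, Finset.sum_div]
  refine Finset.sum_congr rfl fun n _ => ?_
  rw [div_pow]
  have : ((M.choose K : ℝ) ^ (U - 1)) ≠ 0 := by positivity
  field_simp
end

section
/- In a Steiner system S(2,K,M) with C = M(M−1)/(K(K−1)) blocks and D = (M−1)/(K−1) blocks through each point, fix a reference block B and choose U−1 other blocks uniformly at random without replacement. The probability that exactly K' of the K points of B are contained in none of the U−1 chosen blocks equals C(K, K−K') · ∑_{n=0}^{K−K'} (−1)^n C(K−K', n) · C(C−1−(D−1)(n+K'), U−1)/C(C−1, U−1). -/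
open Finset

/-- A Steiner system `S(t, K, M)` on a finite ground type `α`. -/
structure SteinerSystem (t K M : ℕ) (α : Type*) [Fintype α] [DecidableEq α] where
  blocks : Finset (Finset α)
  card_ground : Fintype.card α = M
  block_card : ∀ B ∈ blocks, B.card = K
  steiner : ∀ T : Finset α, T.card = t → ∃! B, B ∈ blocks ∧ T ⊆ B

/-- In a Steiner system `S(2,K,M)` with `C = M(M-1)/(K(K-1))` blocks and `D = (M-1)/(K-1)`
blocks through each point, fixing a reference block `B` and choosing `U - 1` other blocks
uniformly without replacement, the probability that exactly `K'` of the `K` points of `B`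
are contained in none of the chosen blocks equals
`C(K, K-K') ∑_{n=0}^{K-K'} (-1)^n C(K-K', n) C(C-1-(D-1)(n+K'), U-1)/C(C-1, U-1)`. -/
theorem stmt_2 {α : Type*} [Fintype α] [DecidableEq α] (K M C D K' U : ℕ)
    (S : SteinerSystem 2 K M α)
    (hC : S.blocks.card = C)
    (hD : ∀ p : α, (S.blocks.filter (fun A => p ∈ A)).card = D)
    (B : Finset α) (hB : B ∈ S.blocks)
    (hK' : K' ≤ K) (hU : 1 ≤ U) (hUC : U ≤ C) :
    ((((S.blocks.erase B).powersetCard (U - 1)).filter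
        (fun F => (B.filter (fun x => ∀ A ∈ F, x ∉ A)).card = K')).card : ℝ) /
      ((((S.blocks.erase B).powersetCard (U - 1))).card : ℝ)
    = (K.choose (K - K') : ℝ) *
        ∑ n ∈ Finset.range (K - K' + 1),
          (-1 : ℝ) ^ n * ((K - K').choose n : ℝ) *
            (((C - 1 - (D - 1) * (n + K')).choose (U - 1) : ℝ) /
              ((C - 1).choose (U - 1) : ℝ)) := by
  classical
  set Bs := S.blocks.erase B with hBsdef
  set cf : Finset (Finset α) → Finset α := fun F => B.filter (fun x => ∀ A ∈ F, x ∉ A)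
    with hcfdef
  set N := Bs.powersetCard (U - 1) with hNdef
  have hKB : B.card = K := S.block_card B hB
  have hBscard : Bs.card = C - 1 := by rw [hBsdef, card_erase_of_mem hB, hC]
  have hNcard : N.card = (C - 1).choose (U - 1) := by
    rw [hNdef, card_powersetCard, hBscard]
  have hC1 : 1 ≤ C := hC ▸ card_pos.mpr ⟨B, hB⟩
  have hdpos : 0 < (C - 1).choose (U - 1) := Nat.choose_pos (by omega)
  have hcfB : ∀ F, cf F ⊆ B := fun F => filter_subset _ _
  -- no block other than B contains two distinct points of B
  have hpair : ∀ x ∈ B, ∀ y ∈ B, x ≠ y → ∀ A ∈ Bs, x ∈ A → y ∉ A := by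
    intro x hx y hy hxy A hA hxA hyA
    obtain ⟨A', _, huniq⟩ := S.steiner {x, y} (card_pair hxy)
    have hsub : ∀ Z : Finset α, x ∈ Z → y ∈ Z → ({x, y} : Finset α) ⊆ Z := by
      intro Z h1 h2 z hz
      rcases mem_insert.mp hz with rfl | hz
      · exact h1
      · exact (mem_singleton.mp hz) ▸ h2
    have h1 : A = A' := huniq A ⟨mem_of_mem_erase hA, hsub A hxA hyA⟩
    have h2 : B = A' := huniq B ⟨hB, hsub B hx hy⟩
    exact (ne_of_mem_erase hA) (h1.trans h2.symm)
  -- D - 1 other blocks through each point of B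
  have hAx : ∀ x ∈ B, (Bs.filter (fun A => x ∈ A)).card = D - 1 := by
    intro x hx
    have he : Bs.filter (fun A => x ∈ A) = (S.blocks.filter (fun A => x ∈ A)).erase B := by
      ext A
      simp only [hBsdef, mem_filter, mem_erase]
      tauto
    rw [he, card_erase_of_mem (mem_filter.mpr ⟨hB, hx⟩), hD x]
  -- number of other blocks meeting a subset T of B
  have hav : ∀ T, T ⊆ B → (Bs.filter (fun A => ∃ x ∈ T, x ∈ A)).card = (D - 1) * T.card := by
    intro T hTB
    have he : Bs.filter (fun A => ∃ x ∈ T, x ∈ A)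
        = T.biUnion (fun x => Bs.filter (fun A => x ∈ A)) := by
      ext A
      simp only [mem_filter, mem_biUnion]
      tauto
    rw [he, card_biUnion, Finset.sum_congr rfl (fun x hx => hAx x (hTB hx)), sum_const,
      smul_eq_mul, mul_comm]
    intro x hx y hy hxy
    simp only [disjoint_left, mem_filter]
    rintro A ⟨hA1, hA2⟩ ⟨_, hA4⟩
    exact hpair x (hTB hx) y (hTB hy) hxy A hA1 hA2 hA4
  -- count of choices F with a given T collision-free
  have hG : ∀ T, T ⊆ B →
      (N.filter (fun F => T ⊆ cf F)).card = (C - 1 - (D - 1) * T.card).choose (U - 1) := by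
    intro T hTB
    have he : N.filter (fun F => T ⊆ cf F)
        = (Bs \ Bs.filter (fun A => ∃ x ∈ T, x ∈ A)).powersetCard (U - 1) := by
      ext F
      simp only [hNdef, mem_filter, mem_powersetCard]
      constructor
      · rintro ⟨⟨hFBs, hFc⟩, hcf⟩
        refine ⟨?_, hFc⟩
        intro A hAF
        rw [mem_sdiff]
        refine ⟨hFBs hAF, ?_⟩
        rw [mem_filter]
        rintro ⟨-, x, hxT, hxA⟩
        have hx := hcf hxT
        rw [hcfdef, mem_filter] at hx
        exact hx.2 A hAF hxA
      · rintro ⟨hFsub, hFc⟩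
        refine ⟨⟨fun A hA => (mem_sdiff.mp (hFsub hA)).1, hFc⟩, ?_⟩
        intro x hxT
        rw [hcfdef, mem_filter]
        refine ⟨hTB hxT, ?_⟩
        intro A hAF hxA
        have := (mem_sdiff.mp (hFsub hAF)).2
        rw [mem_filter] at this
        exact this ⟨(mem_sdiff.mp (hFsub hAF)).1, x, hxT, hxA⟩
    rw [he, card_powersetCard, card_sdiff_of_subset (filter_subset _ _), hBscard, hav T hTB]
  -- inclusion-exclusion : exact count for a fixed collision-free set S'
  have hE : ∀ S' ∈ B.powersetCard K',
      ((N.filter (fun F => cf F = S')).card : ℤ)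
        = ∑ T ∈ (B \ S').powerset,
            (-1 : ℤ) ^ T.card * ((N.filter (fun F => (S' ∪ T) ⊆ cf F)).card : ℤ) := by
    intro S' hS'
    rw [mem_powersetCard] at hS'
    have key : ∀ F ∈ N,
        (if cf F = S' then (1:ℤ) else 0)
          = ∑ T ∈ (B \ S').powerset,
              (-1:ℤ)^T.card * (if (S' ∪ T) ⊆ cf F then (1:ℤ) else 0) := by
      intro F _
      by_cases hScf : S' ⊆ cf F
      · have h1 : ∀ T ∈ (B \ S').powerset,
            (-1:ℤ)^T.card * (if (S' ∪ T) ⊆ cf F then (1:ℤ) else 0)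
              = if T ∈ (cf F \ S').powerset then (-1:ℤ)^T.card else 0 := by
          intro T hT
          rw [mem_powerset] at hT
          by_cases hTcf : T ⊆ cf F \ S'
          · rw [if_pos (union_subset hScf (hTcf.trans sdiff_subset)),
              if_pos (mem_powerset.mpr hTcf), mul_one]
          · rw [if_neg (fun h => hTcf (subset_sdiff.mpr
              ⟨subset_union_right.trans h, sdiff_disjoint.mono_left hT⟩)),
              if_neg (fun h => hTcf (mem_powerset.mp h)), mul_zero]
        rw [Finset.sum_congr rfl h1, Finset.sum_ite_mem,
          inter_eq_right.mpr (powerset_mono.mpr (sdiff_subset_sdiff (hcfB F) le_rfl)),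
          sum_powerset_neg_one_pow_card]
        have hiff : (cf F = S') ↔ (cf F \ S' = ∅) :=
          ⟨fun h => by simp [h],
           fun h => subset_antisymm (sdiff_eq_empty_iff_subset.mp h) hScf⟩
        simp only [hiff]
      · rw [if_neg (fun h => hScf (by simp [h]))]
        refine (Finset.sum_eq_zero fun T hT => ?_).symm
        rw [if_neg (fun h => hScf (subset_union_left.trans h)), mul_zero]
    calc ((N.filter (fun F => cf F = S')).card : ℤ)
        = ∑ F ∈ N, if cf F = S' then (1:ℤ) else 0 := (Finset.sum_boole _ _).symm
      _ = ∑ F ∈ N, ∑ T ∈ (B \ S').powerset,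
            (-1:ℤ)^T.card * (if (S' ∪ T) ⊆ cf F then (1:ℤ) else 0) := Finset.sum_congr rfl key
      _ = ∑ T ∈ (B \ S').powerset, ∑ F ∈ N,
            (-1:ℤ)^T.card * (if (S' ∪ T) ⊆ cf F then (1:ℤ) else 0) := Finset.sum_comm
      _ = ∑ T ∈ (B \ S').powerset,
            (-1 : ℤ) ^ T.card * ((N.filter (fun F => (S' ∪ T) ⊆ cf F)).card : ℤ) := by
          refine Finset.sum_congr rfl fun T hT => ?_
          rw [← Finset.mul_sum, Finset.sum_boole]
  -- the inner sum depends only on cardinalities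
  have hinner : ∀ S' ∈ B.powersetCard K',
      (∑ T ∈ (B \ S').powerset,
          (-1:ℤ)^T.card * ((N.filter (fun F => (S' ∪ T) ⊆ cf F)).card : ℤ))
        = ∑ n ∈ Finset.range (K - K' + 1),
            (-1:ℤ)^n * ((K - K').choose n : ℤ)
              * ((C - 1 - (D - 1) * (n + K')).choose (U - 1) : ℤ) := by
    intro S' hS'
    rw [mem_powersetCard] at hS'
    have hcardBS : (B \ S').card = K - K' := by rw [card_sdiff_of_subset hS'.1, hKB, hS'.2]
    set f : ℕ → ℤ := fun n => (-1:ℤ)^n * ((C - 1 - (D - 1) * (n + K')).choose (U - 1) : ℤ)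
      with hfdef
    have h1 : ∀ T ∈ (B \ S').powerset,
        (-1:ℤ)^T.card * ((N.filter (fun F => (S' ∪ T) ⊆ cf F)).card : ℤ) = f T.card := by
      intro T hT
      rw [mem_powerset] at hT
      have hdisj : Disjoint S' T := (sdiff_disjoint.mono_left hT).symm
      rw [hfdef]
      simp only
      rw [hG (S' ∪ T) (union_subset hS'.1 (hT.trans sdiff_subset)),
        card_union_of_disjoint hdisj, hS'.2, Nat.add_comm K' T.card]
    calc (∑ T ∈ (B \ S').powerset,
          (-1:ℤ)^T.card * ((N.filter (fun F => (S' ∪ T) ⊆ cf F)).card : ℤ))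
        = ∑ T ∈ (B \ S').powerset, f T.card := Finset.sum_congr rfl h1
      _ = ∑ n ∈ Finset.range ((B \ S').card + 1), ((B \ S').card).choose n • f n :=
          Finset.sum_powerset_apply_card f
      _ = ∑ n ∈ Finset.range (K - K' + 1),
            (-1:ℤ)^n * ((K - K').choose n : ℤ)
              * ((C - 1 - (D - 1) * (n + K')).choose (U - 1) : ℤ) := by
          rw [hcardBS]
          refine Finset.sum_congr rfl fun n _ => ?_
          rw [hfdef]
          simp only [nsmul_eq_mul]
          ring
  -- fiberwise decomposition
  have hfib : (N.filter (fun F => (cf F).card = K')).card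
      = ∑ S' ∈ B.powersetCard K', (N.filter (fun F => cf F = S')).card := by
    rw [Finset.card_eq_sum_card_fiberwise
      (f := cf) (t := B.powersetCard K')
      (fun F hF => mem_powersetCard.mpr ⟨hcfB F, (mem_filter.mp hF).2⟩)]
    refine Finset.sum_congr rfl fun S' hS' => ?_
    rw [mem_powersetCard] at hS'
    congr 1
    ext F
    simp only [mem_filter]
    constructor
    · rintro ⟨⟨h1, -⟩, h3⟩; exact ⟨h1, h3⟩
    · rintro ⟨h1, h2⟩; exact ⟨⟨h1, by rw [h2, hS'.2]⟩, h2⟩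
  -- main integer identity
  have hmain : ((N.filter (fun F => (cf F).card = K')).card : ℤ)
      = (K.choose K' : ℤ) * ∑ n ∈ Finset.range (K - K' + 1),
          (-1:ℤ)^n * ((K - K').choose n : ℤ)
            * ((C - 1 - (D - 1) * (n + K')).choose (U - 1) : ℤ) := by
    rw [hfib, Nat.cast_sum, Finset.sum_congr rfl hE, Finset.sum_congr rfl hinner,
      Finset.sum_const, card_powersetCard, hKB, nsmul_eq_mul]
  -- pass to ℝ
  have hnumR : ((N.filter (fun F => (cf F).card = K')).card : ℝ)
      = (K.choose K' : ℝ) * ∑ n ∈ Finset.range (K - K' + 1),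
          (-1:ℝ)^n * ((K - K').choose n : ℝ)
            * ((C - 1 - (D - 1) * (n + K')).choose (U - 1) : ℝ) := by
    exact_mod_cast hmain
  show ((N.filter (fun F => (cf F).card = K')).card : ℝ) / (N.card : ℝ)
      = (K.choose (K - K') : ℝ) *
        ∑ n ∈ Finset.range (K - K' + 1),
          (-1 : ℝ) ^ n * ((K - K').choose n : ℝ) *
            (((C - 1 - (D - 1) * (n + K')).choose (U - 1) : ℝ) /
              ((C - 1).choose (U - 1) : ℝ))
  rw [hNcard, Nat.choose_symm hK', hnumR, mul_div_assoc, Finset.sum_div]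
  congr 1
  refine Finset.sum_congr rfl fun n _ => ?_
  rw [mul_div_assoc]
end

section
/- Let X be exponentially distributed with mean θ > 0 and let Y be gamma distributed with shape L ≥ 1 (a positive integer) and scale θ, with X and Y independent. Then for every z ≥ 0, P(X/(Y+1) > z) = e^{−z/θ}/(z+1)^L. -/
open MeasureTheory ProbabilityTheory Set Real

lemma expMeasure_Ioi_aux {r t : ℝ} (hr : 0 < r) (ht : 0 ≤ t) :
    expMeasure r (Set.Ioi t) = ENNReal.ofReal (Real.exp (-(r * t))) := by
  have h := isProbabilityMeasure_expMeasure hr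
  have hIic : expMeasure r (Set.Iic t) = ENNReal.ofReal (1 - Real.exp (-(r * t))) := by
    rw [expMeasure, gammaMeasure, withDensity_apply _ measurableSet_Iic]
    have h2 := lintegral_exponentialPDF_eq_antiDeriv hr t
    rw [if_pos ht] at h2
    exact h2
  have hle : Real.exp (-(r * t)) ≤ 1 := by
    rw [Real.exp_le_one_iff]
    nlinarith
  rw [show Set.Ioi t = (Set.Iic t)ᶜ from Set.compl_Iic.symm,
    measure_compl measurableSet_Iic (measure_ne_top _ _), measure_univ, hIic,
    ← ENNReal.ofReal_one, ← ENNReal.ofReal_sub _ (by linarith)]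
  congr 1
  ring

lemma gamma_shift_aux {L : ℕ} (hL : 1 ≤ L) {θ z : ℝ} (hθ : 0 < θ) (hz : 0 ≤ z) (y : ℝ) :
    ENNReal.ofReal (Real.exp (-(z / θ * y))) * gammaPDF L θ⁻¹ y
      = ENNReal.ofReal (θ⁻¹ ^ (L : ℝ) / ((1 + z) / θ) ^ (L : ℝ))
          * gammaPDF L ((1 + z) / θ) y := by
  rcases lt_or_ge y 0 with hy | hy
  · rw [gammaPDF_of_neg hy, gammaPDF_of_neg hy, mul_zero, mul_zero]
  · have hc : (0 : ℝ) < (1 + z) / θ := by positivity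
    have hcL : (0 : ℝ) < ((1 + z) / θ) ^ (L : ℝ) := Real.rpow_pos_of_pos hc _
    rw [gammaPDF_of_nonneg hy, gammaPDF_of_nonneg hy,
      ← ENNReal.ofReal_mul (Real.exp_pos _).le,
      ← ENNReal.ofReal_mul (by positivity)]
    congr 1
    have hexp : Real.exp (-(z / θ * y)) * Real.exp (-(θ⁻¹ * y))
        = Real.exp (-((1 + z) / θ * y)) := by
      rw [← Real.exp_add]
      congr 1
      field_simp
      ring
    have hL0 : (0 : ℝ) < (L : ℝ) := by exact_mod_cast hL
    have hg : Real.Gamma (L : ℝ) ≠ 0 := (Real.Gamma_pos_of_pos hL0).ne'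
    calc Real.exp (-(z / θ * y)) * (θ⁻¹ ^ (L : ℝ) / Real.Gamma L * y ^ ((L : ℝ) - 1)
            * Real.exp (-(θ⁻¹ * y)))
        = θ⁻¹ ^ (L : ℝ) / Real.Gamma L * y ^ ((L : ℝ) - 1)
            * (Real.exp (-(z / θ * y)) * Real.exp (-(θ⁻¹ * y))) := by ring
      _ = θ⁻¹ ^ (L : ℝ) / Real.Gamma L * y ^ ((L : ℝ) - 1)
            * Real.exp (-((1 + z) / θ * y)) := by rw [hexp]
      _ = θ⁻¹ ^ (L : ℝ) / ((1 + z) / θ) ^ (L : ℝ)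
            * (((1 + z) / θ) ^ (L : ℝ) / Real.Gamma L * y ^ ((L : ℝ) - 1)
              * Real.exp (-((1 + z) / θ * y))) := by
          field_simp

/-- If `X` is exponential with mean `θ > 0` and `Y` is gamma with integer shape `L ≥ 1`
and scale `θ`, independent of `X`, then `P(X/(Y+1) > z) = e^{-z/θ}/(z+1)^L` for `z ≥ 0`. -/
theorem stmt_5 {Ω : Type*} [MeasurableSpace Ω] (μ : Measure Ω) [IsProbabilityMeasure μ]
    (θ : ℝ) (hθ : 0 < θ) (L : ℕ) (hL : 1 ≤ L)
    (X Y : Ω → ℝ) (hXm : Measurable X) (hYm : Measurable Y)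
    (hX : Measure.map X μ = expMeasure θ⁻¹)
    (hY : Measure.map Y μ = gammaMeasure L θ⁻¹)
    (hindep : IndepFun X Y μ) :
    ∀ z : ℝ, 0 ≤ z →
      μ {ω | z < X ω / (Y ω + 1)} =
        ENNReal.ofReal (Real.exp (-z / θ) / (z + 1) ^ L) := by
  intro z hz
  have hθi : 0 < θ⁻¹ := inv_pos.mpr hθ
  have hL0 : (0 : ℝ) < (L : ℝ) := by exact_mod_cast hL
  haveI hPe : IsProbabilityMeasure (expMeasure θ⁻¹) := isProbabilityMeasure_expMeasure hθi
  haveI hPg : IsProbabilityMeasure (gammaMeasure L θ⁻¹) := isProbabilityMeasure_gammaMeasure hL0 hθi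
  set S : Set (ℝ × ℝ) := {p : ℝ × ℝ | z < p.1 / (p.2 + 1)} with hS
  have hSm : MeasurableSet S :=
    measurableSet_lt measurable_const (measurable_fst.div (measurable_snd.add_const 1))
  have hmap : μ.map (fun ω => (X ω, Y ω)) = (expMeasure θ⁻¹).prod (gammaMeasure L θ⁻¹) := by
    rw [← hX, ← hY]
    exact (indepFun_iff_map_prod_eq_prod_map_map hXm.aemeasurable hYm.aemeasurable).mp hindep
  have hset : {ω | z < X ω / (Y ω + 1)} = (fun ω => (X ω, Y ω)) ⁻¹' S := rfl
  rw [hset, ← Measure.map_apply (hXm.prodMk hYm) hSm, hmap, Measure.prod_apply_symm hSm]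
  have hae : ∀ᵐ y ∂(gammaMeasure L θ⁻¹), 0 ≤ y := by
    rw [ae_iff]
    have h0 : {y : ℝ | ¬ 0 ≤ y} = Iio 0 := by ext y; simp [not_le]
    rw [h0, gammaMeasure, withDensity_apply _ measurableSet_Iio]
    exact lintegral_gammaPDF_of_nonpos le_rfl
  have hcong : ∫⁻ y, expMeasure θ⁻¹ ((fun x => (x, y)) ⁻¹' S) ∂(gammaMeasure L θ⁻¹)
      = ∫⁻ y, ENNReal.ofReal (Real.exp (-z / θ))
          * ENNReal.ofReal (Real.exp (-(z / θ * y))) ∂(gammaMeasure L θ⁻¹) := by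
    refine lintegral_congr_ae ?_
    filter_upwards [hae] with y hy
    have h1 : (fun x => (x, y)) ⁻¹' S = Ioi (z * (y + 1)) := by
      ext x
      simp only [hS, mem_preimage, mem_setOf_eq, mem_Ioi]
      rw [lt_div_iff₀ (by linarith : (0:ℝ) < y + 1)]
    rw [h1, expMeasure_Ioi_aux hθi (by nlinarith), ← ENNReal.ofReal_mul (Real.exp_pos _).le,
      ← Real.exp_add]
    congr 2
    field_simp
    ring
  rw [hcong, lintegral_const_mul _ (by fun_prop)]
  have hkey : ∫⁻ y, ENNReal.ofReal (Real.exp (-(z / θ * y))) ∂(gammaMeasure L θ⁻¹)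
      = ENNReal.ofReal (θ⁻¹ ^ (L : ℝ) / ((1 + z) / θ) ^ (L : ℝ)) := by
    have hm : Measurable (gammaPDF (L : ℝ) θ⁻¹) := (measurable_gammaPDFReal _ _).ennreal_ofReal
    rw [gammaMeasure, lintegral_withDensity_eq_lintegral_mul _ hm (by fun_prop)]
    have : ∀ y : ℝ, (gammaPDF L θ⁻¹ * fun y => ENNReal.ofReal (Real.exp (-(z / θ * y)))) y
        = ENNReal.ofReal (θ⁻¹ ^ (L : ℝ) / ((1 + z) / θ) ^ (L : ℝ))
            * gammaPDF L ((1 + z) / θ) y := fun y => by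
      rw [Pi.mul_apply, mul_comm]
      exact gamma_shift_aux hL hθ hz y
    rw [lintegral_congr this, lintegral_const_mul _ (by
      exact (measurable_gammaPDFReal _ _).ennreal_ofReal),
      lintegral_gammaPDF_eq_one hL0 (by positivity), mul_one]
  rw [hkey, ← ENNReal.ofReal_mul (Real.exp_pos _).le]
  congr 1
  rw [Real.rpow_natCast, Real.rpow_natCast, div_pow]
  have h1 : (1 + z) ^ L ≠ 0 := by positivity
  have h2 : θ ^ L ≠ 0 := by positivity
  rw [show z + 1 = 1 + z by ring]
  field_simp
  rw [← mul_pow, one_div, inv_mul_cancel₀ hθ.ne', one_pow]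
end

section
/- Let S(t,K,M) be a Steiner system with t ≥ 2 and consider its blocks as access patterns. A 'stopping set' is a nonempty subfamily of blocks such that every point of the ground set is covered by either zero or at least two blocks of the subfamily. Then every stopping set has at least ⌈K/(t−1)⌉ + 1 blocks. -/
open Finset

/-- Two distinct blocks intersect in at most `t - 1` points. -/
lemma inter_card_le {t K M : ℕ} {α : Type*} [Fintype α] [DecidableEq α]
    (S : SteinerSystem t K M α) {A B : Finset α} (hA : A ∈ S.blocks) (hB : B ∈ S.blocks)
    (hne : A ≠ B) : (A ∩ B).card ≤ t - 1 := by
  by_contra h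
  push_neg at h
  have ht' : t ≤ (A ∩ B).card := by omega
  obtain ⟨T', hT'sub, hT'card⟩ := Finset.exists_subset_card_eq ht'
  obtain ⟨C, hC, hCuniq⟩ := S.steiner T' hT'card
  have hAeq : A = C := hCuniq A ⟨hA, hT'sub.trans inter_subset_left⟩
  have hBeq : B = C := hCuniq B ⟨hB, hT'sub.trans inter_subset_right⟩
  exact hne (hAeq.trans hBeq.symm)

/-- In a Steiner system `S(t,K,M)` with `t ≥ 2`, every stopping set (a nonempty subfamily of
blocks in which every point is covered either zero times or at least twice) contains at
least `⌈K/(t-1)⌉ + 1` blocks. -/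
theorem stmt_11 {α : Type*} [Fintype α] [DecidableEq α] (t K M : ℕ) (ht : 2 ≤ t)
    (S : SteinerSystem t K M α)
    (T : Finset (Finset α)) (hTsub : T ⊆ S.blocks) (hTne : T.Nonempty)
    (hstop : ∀ x : α, (T.filter (fun A => x ∈ A)).card = 0 ∨
      2 ≤ (T.filter (fun A => x ∈ A)).card) :
    K ⌈/⌉ (t - 1) + 1 ≤ T.card := by
  obtain ⟨B, hB⟩ := hTne
  have hBblock : B ∈ S.blocks := hTsub hB
  have hBcard : B.card = K := S.block_card B hBblock
  -- B is covered by the other blocks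
  have hcover : B ⊆ (T.erase B).biUnion (fun A => A ∩ B) := by
    intro x hx
    have h2 : 2 ≤ (T.filter (fun A => x ∈ A)).card := by
      rcases hstop x with h | h
      · exfalso
        have : B ∈ T.filter (fun A => x ∈ A) := mem_filter.2 ⟨hB, hx⟩
        rw [Finset.card_eq_zero] at h
        simp [h] at this
      · exact h
    have : ∃ A ∈ T.filter (fun A => x ∈ A), A ≠ B := by
      by_contra hc
      push_neg at hc
      have : T.filter (fun A => x ∈ A) ⊆ {B} := fun A hA => mem_singleton.2 (hc A hA)
      have := Finset.card_le_card this
      simp at this; omega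
    obtain ⟨A, hA, hAne⟩ := this
    rw [mem_filter] at hA
    exact Finset.mem_biUnion.2 ⟨A, Finset.mem_erase.2 ⟨hAne, hA.1⟩,
      Finset.mem_inter.2 ⟨hA.2, hx⟩⟩
  have hK : K ≤ (T.card - 1) * (t - 1) := by
    calc K = B.card := hBcard.symm
    _ ≤ ((T.erase B).biUnion (fun A => A ∩ B)).card := Finset.card_le_card hcover
    _ ≤ ∑ A ∈ T.erase B, (A ∩ B).card := Finset.card_biUnion_le
    _ ≤ ∑ A ∈ T.erase B, (t - 1) := by
        apply Finset.sum_le_sum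
        intro A hA
        exact inter_card_le S (hTsub (Finset.mem_of_mem_erase hA)) hBblock
          (Finset.ne_of_mem_erase hA)
    _ = (T.card - 1) * (t - 1) := by rw [Finset.sum_const, Finset.card_erase_of_mem hB]; ring
  have htpos : 0 < t - 1 := by omega
  have hTpos : 1 ≤ T.card := Finset.card_pos.2 ⟨B, hB⟩
  have : K ⌈/⌉ (t - 1) ≤ T.card - 1 := by
    rw [ceilDiv_le_iff_le_mul htpos, mul_comm]
    exact hK
  omega
end

section
/- Let X be Gamma(a, θ) and Y be Gamma(b, α) independent, with a, b positive integers and θ, α > 0. Then the density of X + Y at z > 0 equals (α/θ)^a · (1/α)^{a+b} z^{a+b−1} e^{−z/α} / Γ(a+b) · ₁F₁(a; a+b; z(1/α − 1/θ)), where ₁F₁ is Kummer's confluent hypergeometric function. -/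
open MeasureTheory ProbabilityTheory
open scoped ENNReal

/-- Kummer's confluent hypergeometric function
`₁F₁(p; q; x) = ∑_{n≥0} (p)_n x^n / ((q)_n n!)` (Pochhammer symbols). -/
noncomputable def kummer1F1 (p q x : ℝ) : ℝ :=
  ∑' n : ℕ, ((ascPochhammer ℝ n).eval p / (ascPochhammer ℝ n).eval q) * x ^ n / n.factorial

set_option linter.unreachableTactic false
set_option linter.unusedTactic false

open MeasureTheory intervalIntegral
open scoped ENNReal

lemma beta_nat (m k : ℕ) :
    ∫ x in (0:ℝ)..1, x ^ m * (1 - x) ^ k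
      = (m.factorial * k.factorial : ℝ) / (m + k + 1).factorial := by
  have hs : (0:ℝ) < (Complex.re (m+1)) := by simp; positivity
  have ht : (0:ℝ) < (Complex.re (k+1)) := by simp; positivity
  have h := Complex.Gamma_mul_Gamma_eq_betaIntegral (s := (m:ℂ)+1) (t := (k:ℂ)+1) hs ht
  rw [Complex.betaIntegral] at h
  have hβ : (∫ x in (0:ℝ)..1, (x:ℂ) ^ ((m:ℂ)+1-1) * (1 - (x:ℂ)) ^ ((k:ℂ)+1-1))
      = ((∫ x in (0:ℝ)..1, x ^ m * (1 - x) ^ k : ℝ) : ℂ) := by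
    rw [← intervalIntegral.integral_ofReal]
    refine intervalIntegral.integral_congr fun x _ => ?_
    push_cast
    rw [add_sub_cancel_right, add_sub_cancel_right, Complex.cpow_natCast, Complex.cpow_natCast]
  rw [hβ] at h
  have h1 : Complex.Gamma ((m:ℂ)+1) = (m.factorial : ℂ) := by
    exact_mod_cast Complex.Gamma_nat_eq_factorial m
  have h2 : Complex.Gamma ((k:ℂ)+1) = (k.factorial : ℂ) := by
    exact_mod_cast Complex.Gamma_nat_eq_factorial k
  have h3 : Complex.Gamma ((m:ℂ)+1 + ((k:ℂ)+1)) = ((m+k+1).factorial : ℂ) := by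
    have : (m:ℂ)+1+((k:ℂ)+1) = ((m+k+1 : ℕ) : ℂ) + 1 := by push_cast; ring
    rw [this]
    exact_mod_cast Complex.Gamma_nat_eq_factorial (m+k+1)
  rw [h1, h2, h3] at h
  have hne : ((m+k+1).factorial : ℂ) ≠ 0 := by exact_mod_cast (Nat.factorial_pos _).ne'
  field_simp at h ⊢
  have h' : ((m+k+1).factorial : ℝ) * ∫ x in (0:ℝ)..1, x ^ m * (1 - x) ^ k
      = (m.factorial * k.factorial : ℕ) := by exact_mod_cast h.symm
  rw [mul_comm] at h'
  exact_mod_cast h'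

lemma beta_nat_scaled (m k : ℕ) {z : ℝ} (hz : 0 < z) :
    ∫ x in (0:ℝ)..z, x ^ m * (z - x) ^ k
      = z ^ (m + k + 1) * (m.factorial * k.factorial) / (m + k + 1).factorial := by
  have hzne : z ≠ 0 := hz.ne'
  have := intervalIntegral.integral_comp_mul_left
    (f := fun x => x ^ m * (z - x) ^ k) (a := (0:ℝ)) (b := 1) (c := z) hzne
  simp only [mul_zero, mul_one] at this
  have h2 : ∫ x in (0:ℝ)..1, (z*x) ^ m * (z - z*x) ^ k
      = z^(m+k) * ∫ x in (0:ℝ)..1, x ^ m * (1 - x) ^ k := by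
    rw [← intervalIntegral.integral_const_mul]
    refine intervalIntegral.integral_congr fun x _ => ?_
    have : z - z*x = z * (1-x) := by ring
    rw [this, mul_pow, mul_pow, pow_add]
    ring
  rw [h2, beta_nat] at this
  have : (∫ x in (0:ℝ)..z, x ^ m * (z - x) ^ k)
      = z * (z^(m+k) * ((m.factorial * k.factorial : ℝ) / (m + k + 1).factorial)) := by
    rw [this, smul_eq_mul]; field_simp
  rw [this, pow_succ]
  ring

open Set

lemma exp_series (x : ℝ) : Real.exp x = ∑' n : ℕ, x ^ n / n.factorial := by
  rw [Real.exp_eq_exp_ℝ, NormedSpace.exp_eq_tsum_div]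

lemma series_integral (m k : ℕ) (c : ℝ) {z : ℝ} (hz : 0 < z) :
    ∫ x in (0:ℝ)..z, x ^ m * (z - x) ^ k * Real.exp (c * x)
      = ∑' n : ℕ, (c ^ n / n.factorial)
          * (z ^ (m + n + k + 1) * ((m + n).factorial * k.factorial) / (m + n + k + 1).factorial) := by
  set f : ℕ → ℝ → ℝ := fun n x => (c ^ n / n.factorial) * (x ^ (m + n) * (z - x) ^ k) with hf
  have hpt : ∀ x : ℝ, x ^ m * (z - x) ^ k * Real.exp (c * x) = ∑' n, f n x := by
    intro x
    rw [exp_series (c * x), ← tsum_mul_left]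
    refine tsum_congr fun n => ?_
    simp only [hf, mul_pow, pow_add]
    ring
  rw [intervalIntegral.integral_of_le hz.le]
  calc ∫ x in Ioc (0:ℝ) z, x ^ m * (z - x) ^ k * Real.exp (c * x)
      = ∫ x in Ioc (0:ℝ) z, ∑' n, f n x := by
        exact integral_congr_ae (Filter.Eventually.of_forall fun x => hpt x)
    _ = ∑' n, ∫ x in Ioc (0:ℝ) z, f n x := by
        refine integral_tsum (fun n => ?_) ?_
        · fun_prop
        · -- bound the lintegrals
          have hb : ∀ n, (∫⁻ x in Ioc (0:ℝ) z, ‖f n x‖₊ ∂volume)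
              ≤ ENNReal.ofReal ((|c| ^ n / n.factorial) * z ^ (m + n + k)) * ENNReal.ofReal z := by
            intro n
            have hle : ∀ x ∈ Ioc (0:ℝ) z,
                (‖f n x‖₊ : ℝ≥0∞) ≤ ENNReal.ofReal ((|c| ^ n / n.factorial) * z ^ (m + n + k)) := by
              intro x hx
              rw [← ENNReal.ofReal_coe_nnreal, coe_nnnorm]
              refine ENNReal.ofReal_le_ofReal ?_
              have hx0 : 0 ≤ x := hx.1.le
              have hxz : x ≤ z := hx.2
              have hzx : |z - x| ≤ z := by
                rw [abs_of_nonneg (by linarith)]; linarith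
              calc ‖f n x‖ = (|c| ^ n / n.factorial) * (|x| ^ (m + n) * |z - x| ^ k) := by
                    simp [hf, norm_mul, abs_mul, abs_pow, abs_div, Nat.abs_cast]
                _ ≤ (|c| ^ n / n.factorial) * (z ^ (m + n) * z ^ k) := by
                    have h1 : |x| ^ (m+n) ≤ z ^ (m+n) :=
                      pow_le_pow_left₀ (abs_nonneg x) (by rwa [abs_of_nonneg hx0]) _
                    have h2 : |z - x| ^ k ≤ z ^ k := pow_le_pow_left₀ (abs_nonneg _) hzx k
                    have hc : 0 ≤ |c| ^ n / n.factorial := by positivity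
                    exact mul_le_mul_of_nonneg_left
                      (mul_le_mul h1 h2 (by positivity) (by positivity)) hc
                _ = (|c| ^ n / n.factorial) * z ^ (m + n + k) := by ring
            calc (∫⁻ x in Ioc (0:ℝ) z, ‖f n x‖₊ ∂volume)
                ≤ ∫⁻ _ in Ioc (0:ℝ) z, ENNReal.ofReal ((|c| ^ n / n.factorial) * z ^ (m + n + k)) ∂volume :=
                  setLIntegral_mono (by fun_prop) hle
              _ = ENNReal.ofReal ((|c| ^ n / n.factorial) * z ^ (m + n + k)) * ENNReal.ofReal z := by
                  rw [setLIntegral_const]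
                  simp [Real.volume_Ioc, hz.le]
            -- done
          refine ne_top_of_le_ne_top ?_ (ENNReal.tsum_le_tsum hb)
          rw [ENNReal.tsum_mul_right]
          have hsum : Summable (fun n : ℕ => (|c| ^ n / n.factorial) * z ^ (m + n + k)) := by
            have : ∀ n : ℕ, (|c| ^ n / n.factorial) * z ^ (m + n + k)
                = (z ^ (m + k) ) * ((|c| * z) ^ n / n.factorial) := by
              intro n
              rw [mul_pow, pow_add, pow_add]
              ring
            simp_rw [this]
            exact (Real.summable_pow_div_factorial (|c| * z)).mul_left _
          rw [← ENNReal.ofReal_tsum_of_nonneg (fun n => by positivity) hsum]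
          exact ENNReal.mul_ne_top ENNReal.ofReal_ne_top ENNReal.ofReal_ne_top
    _ = ∑' n, (c ^ n / n.factorial)
          * (z ^ (m + n + k + 1) * ((m + n).factorial * k.factorial) / (m + n + k + 1).factorial) := by
        refine tsum_congr fun n => ?_
        simp only [hf]
        rw [MeasureTheory.integral_const_mul, ← intervalIntegral.integral_of_le hz.le,
          beta_nat_scaled (m+n) k hz]


open Set

lemma conv_withDensity (f g : ℝ → ℝ≥0∞) (hf : Measurable f) (hg : Measurable g) :
    (volume.withDensity f).conv (volume.withDensity g)
      = volume.withDensity (fun z => ∫⁻ x, f x * g (z - x)) := by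
  have hD : Measurable (fun z => ∫⁻ x, f x * g (z - x)) := by
    apply Measurable.lintegral_prod_right (f := fun z x => f x * g (z - x))
    exact (hf.comp measurable_snd).mul (hg.comp (measurable_fst.sub measurable_snd))
  ext s hs
  rw [Measure.conv, Measure.map_apply (by fun_prop) hs,
    Measure.prod_apply (measurableSet_preimage (by fun_prop) hs)]
  have key : ∀ x : ℝ, (volume.withDensity g) (Prod.mk x ⁻¹' ((fun p : ℝ × ℝ => p.1 + p.2) ⁻¹' s))
      = ∫⁻ z, s.indicator (fun _ => (1:ℝ≥0∞)) z * g (z - x) := by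
    intro x
    have hpre : Prod.mk x ⁻¹' ((fun p : ℝ × ℝ => p.1 + p.2) ⁻¹' s) = (fun y => y + x) ⁻¹' s := by
      ext y; simp [add_comm]
    rw [hpre, withDensity_apply _ (measurableSet_preimage (measurable_add_const x) hs),
      ← lintegral_indicator (measurableSet_preimage (measurable_add_const x) hs) g]
    have := lintegral_add_right_eq_self (μ := volume)
      (fun z => s.indicator (fun _ => (1:ℝ≥0∞)) z * g (z - x)) x
    rw [← this]
    refine lintegral_congr fun y => ?_
    simp only [add_sub_cancel_right, Set.indicator_apply, mem_preimage]
    by_cases hy : y + x ∈ s <;> simp [hy]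
  simp_rw [key]
  rw [lintegral_withDensity_eq_lintegral_mul _ hf]
  swap
  · apply Measurable.lintegral_prod_right (f := fun x z =>
      s.indicator (fun _ => (1:ℝ≥0∞)) z * g (z - x))
    exact ((measurable_indicator_const_iff 1).2 hs).comp measurable_snd |>.mul
      (hg.comp (measurable_snd.sub measurable_fst))
  have hswap : ∫⁻ x, f x * ∫⁻ z, s.indicator (fun _ => (1:ℝ≥0∞)) z * g (z - x)
      = ∫⁻ z, ∫⁻ x, f x * (s.indicator (fun _ => (1:ℝ≥0∞)) z * g (z - x)) := by
    have h1 : ∀ x, f x * (∫⁻ z, s.indicator (fun _ => (1:ℝ≥0∞)) z * g (z - x))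
        = ∫⁻ z, f x * (s.indicator (fun _ => (1:ℝ≥0∞)) z * g (z - x)) := by
      intro x
      rw [lintegral_const_mul]
      exact (((measurable_indicator_const_iff 1).2 hs)).mul (hg.comp (measurable_id.sub_const x))
    simp_rw [h1]
    rw [lintegral_lintegral_swap]
    apply Measurable.aemeasurable
    exact (hf.comp measurable_fst).mul
      ((((measurable_indicator_const_iff 1).2 hs).comp measurable_snd).mul
        (hg.comp (measurable_snd.sub measurable_fst)))
  simp only [Pi.mul_apply]
  rw [hswap]
  have h2 : ∀ z : ℝ, (∫⁻ x, f x * (s.indicator (fun _ => (1:ℝ≥0∞)) z * g (z - x)))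
      = s.indicator (fun _ => (1:ℝ≥0∞)) z * ∫⁻ x, f x * g (z - x) := by
    intro z
    rw [← lintegral_const_mul]
    · refine lintegral_congr fun x => by ring
    · exact hf.mul (hg.comp (measurable_const.sub measurable_id))
  simp_rw [h2]
  rw [withDensity_apply _ hs, ← lintegral_indicator hs]
  refine lintegral_congr fun z => ?_
  by_cases hz : z ∈ s <;> simp [Set.indicator_apply, hz]


lemma poch_eval (j n : ℕ) (hj : 1 ≤ j) :
    (ascPochhammer ℝ n).eval ((j:ℕ) : ℝ) = ((j - 1 + n).factorial : ℝ) / (j - 1).factorial := by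
  have h1 : (j - 1).factorial * (j - 1 + 1).ascFactorial n = ((j - 1) + n).factorial :=
    Nat.factorial_mul_ascFactorial (j - 1) n
  rw [show j - 1 + 1 = j from by omega] at h1
  have h2 : (ascPochhammer ℝ n).eval ((j:ℕ) : ℝ) = (j.ascFactorial n : ℝ) := by
    rw [← ascPochhammer_nat_eq_ascFactorial]
    exact_mod_cast (ascPochhammer_eval_cast (S := ℝ) n j).symm
  rw [h2]
  have hne : ((j - 1).factorial : ℝ) ≠ 0 := by exact_mod_cast (Nat.factorial_pos _).ne'
  field_simp
  norm_cast
  rw [mul_comm]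
  exact h1

lemma gamma_density_pt (A B : ℕ) {θ α : ℝ} (hθ : 0 < θ) (hα : 0 < α) (z : ℝ) :
    (∫⁻ x, gammaPDF ((A+1 : ℕ) : ℝ) θ⁻¹ x * gammaPDF ((B+1 : ℕ) : ℝ) α⁻¹ (z - x))
      = ENNReal.ofReal (if 0 < z then
          (α / θ) ^ (A+1) * (1 / α) ^ (A+1+(B+1)) * z ^ (A+1+(B+1)-1) * Real.exp (-z / α) /
              Real.Gamma (((A+1:ℕ) : ℝ) + ((B+1:ℕ) : ℝ)) *
            kummer1F1 ((A+1:ℕ) : ℝ) (((A+1:ℕ):ℝ) + ((B+1:ℕ):ℝ)) (z * (1 / α - 1 / θ))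
        else 0) := by
  have hθ' : (0:ℝ) < θ⁻¹ := inv_pos.2 hθ
  have hα' : (0:ℝ) < α⁻¹ := inv_pos.2 hα
  have h0 : ∀ᵐ x : ℝ, x ≠ (0:ℝ) := by
    rw [ae_iff]
    simp
  rcases lt_or_ge 0 z with hz | hz
  · rw [if_pos hz]
    set c : ℝ := α⁻¹ - θ⁻¹ with hc
    set C0 : ℝ := θ⁻¹ ^ (A+1) * α⁻¹ ^ (B+1) / (A.factorial * B.factorial)
      * Real.exp (-(α⁻¹ * z)) with hC0
    set F : ℝ → ℝ := fun x =>
      gammaPDFReal ((A+1 : ℕ) : ℝ) θ⁻¹ x * gammaPDFReal ((B+1 : ℕ) : ℝ) α⁻¹ (z - x) with hFdef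
    have hApos : (0:ℝ) < ((A+1:ℕ) : ℝ) := by positivity
    have hBpos : (0:ℝ) < ((B+1:ℕ) : ℝ) := by positivity
    have hF0 : ∀ x, 0 ≤ F x := fun x =>
      mul_nonneg (gammaPDFReal_nonneg hApos hθ' x) (gammaPDFReal_nonneg hBpos hα' _)
    have hF : ∀ x ∈ Set.Ioc (0:ℝ) z,
        F x = C0 * (x ^ A * (z - x) ^ B * Real.exp (c * x)) := by
      intro x hx
      have hx0 : (0:ℝ) ≤ x := hx.1.le
      have hzx : (0:ℝ) ≤ z - x := by linarith [hx.2]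
      rw [hFdef]
      simp only [gammaPDFReal, if_pos hx0, if_pos hzx]
      have cast1 : ((A+1 : ℕ) : ℝ) - 1 = ((A:ℕ) : ℝ) := by push_cast; ring
      have cast2 : ((B+1 : ℕ) : ℝ) - 1 = ((B:ℕ) : ℝ) := by push_cast; ring
      rw [cast1, cast2, Real.rpow_natCast, Real.rpow_natCast, Real.rpow_natCast,
        Real.rpow_natCast]
      rw [show ((A+1:ℕ):ℝ) = (A:ℝ)+1 by push_cast; ring,
        show ((B+1:ℕ):ℝ) = (B:ℝ)+1 by push_cast; ring,
        Real.Gamma_nat_eq_factorial, Real.Gamma_nat_eq_factorial]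
      have hexp : Real.exp (-(θ⁻¹ * x)) * Real.exp (-(α⁻¹ * (z-x)))
          = Real.exp (-(α⁻¹*z)) * Real.exp (c*x) := by
        rw [← Real.exp_add, ← Real.exp_add]
        congr 1
        rw [hc]; ring
      rw [hC0]
      linear_combination (θ⁻¹^(A+1)/(A.factorial:ℝ) * x^A * (α⁻¹^(B+1)/(B.factorial:ℝ))
        * (z-x)^B) * hexp
    have hzero : ∀ x : ℝ, x ≠ 0 → x ∉ Set.Ioc (0:ℝ) z → F x = 0 := by
      intro x hx0 hxI
      rcases lt_or_ge x 0 with h | h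
      · rw [hFdef]
        simp only [gammaPDFReal, if_neg (not_le.2 h), zero_mul]
      · have hx' : 0 < x := h.lt_of_ne (Ne.symm hx0)
        have hxz : ¬ x ≤ z := fun hle => hxI ⟨hx', hle⟩
        have : ¬ (0:ℝ) ≤ z - x := by
          push_neg at hxz ⊢; linarith
        rw [hFdef]
        simp only [gammaPDFReal, if_neg this, mul_zero]
    have step1 : (∫⁻ x, gammaPDF ((A+1 : ℕ) : ℝ) θ⁻¹ x * gammaPDF ((B+1 : ℕ) : ℝ) α⁻¹ (z - x))
        = ∫⁻ x in Set.Ioc (0:ℝ) z, ENNReal.ofReal (F x) := by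
      rw [← lintegral_indicator measurableSet_Ioc]
      refine lintegral_congr_ae ?_
      filter_upwards [h0] with x hx
      have hprod : gammaPDF ((A+1 : ℕ) : ℝ) θ⁻¹ x * gammaPDF ((B+1 : ℕ) : ℝ) α⁻¹ (z - x)
          = ENNReal.ofReal (F x) := by
        rw [hFdef]
        exact (ENNReal.ofReal_mul (gammaPDFReal_nonneg hApos hθ' x)).symm
      rw [hprod]
      by_cases hmem : x ∈ Set.Ioc (0:ℝ) z
      · rw [Set.indicator_of_mem hmem]
      · rw [Set.indicator_of_notMem hmem, hzero x hx hmem, ENNReal.ofReal_zero]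
    have hcont : Continuous (fun x : ℝ => C0 * (x ^ A * (z - x) ^ B * Real.exp (c * x))) := by
      continuity
    have hIntG : IntegrableOn (fun x : ℝ => C0 * (x ^ A * (z - x) ^ B * Real.exp (c * x)))
        (Set.Ioc 0 z) := hcont.integrableOn_Ioc
    have hIntF : IntegrableOn F (Set.Ioc 0 z) :=
      hIntG.congr_fun (fun x hx => (hF x hx).symm) measurableSet_Ioc
    rw [step1, ← MeasureTheory.ofReal_integral_eq_lintegral_ofReal hIntF
      (Filter.Eventually.of_forall fun x => hF0 x)]
    congr 1
    rw [setIntegral_congr_fun measurableSet_Ioc hF, MeasureTheory.integral_const_mul,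
      ← intervalIntegral.integral_of_le hz.le, series_integral A B c hz]
    -- now pure series algebra
    rw [kummer1F1]
    rw [show z * (1 / α - 1 / θ) = z * c by rw [hc]; ring]
    rw [show (((A+1:ℕ):ℝ) + ((B+1:ℕ):ℝ)) = ((A+B+2 : ℕ) : ℝ) by push_cast; ring]
    rw [show Real.Gamma ((A+B+2 : ℕ) : ℝ) = ((A+B+1).factorial : ℝ) by
      rw [show ((A+B+2 : ℕ) : ℝ) = ((A+B+1:ℕ):ℝ) + 1 by push_cast; ring,
        Real.Gamma_nat_eq_factorial]]
    rw [← tsum_mul_left, ← tsum_mul_left]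
    refine tsum_congr fun n => ?_
    rw [poch_eval (A+1) n (by omega), poch_eval (A+B+2) n (by omega)]
    have e1 : A + 1 - 1 = A := by omega
    have e2 : A + B + 2 - 1 = A + B + 1 := by omega
    have e3 : A + n + B + 1 = A + B + 1 + n := by omega
    have e4 : A + 1 + (B+1) - 1 = A + B + 1 := by omega
    rw [e1, e2, e3, e4, hC0]
    rw [show Real.exp (-z/α) = Real.exp (-(α⁻¹*z)) by congr 1; ring]
    have hfA : ((A.factorial : ℝ)) ≠ 0 := by exact_mod_cast (Nat.factorial_pos _).ne'
    have hfB : ((B.factorial : ℝ)) ≠ 0 := by exact_mod_cast (Nat.factorial_pos _).ne'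
    have hfn : ((n.factorial : ℝ)) ≠ 0 := by exact_mod_cast (Nat.factorial_pos _).ne'
    have hf1 : (((A+B+1).factorial : ℝ)) ≠ 0 := by exact_mod_cast (Nat.factorial_pos _).ne'
    have hf2 : (((A+B+1+n).factorial : ℝ)) ≠ 0 := by exact_mod_cast (Nat.factorial_pos _).ne'
    have hzA : z ^ (A+B+1+n) = z ^ (A+B+1) * z ^ n := by rw [pow_add]
    rw [mul_pow]
    have hαne : α ≠ 0 := hα.ne'
    field_simp
    have h1 : α * α⁻¹ = 1 := mul_inv_cancel₀ hαne
    have hk : α * α ^ A * α⁻¹ ^ 2 * α⁻¹ ^ A = α⁻¹ := by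
      calc α * α ^ A * α⁻¹ ^ 2 * α⁻¹ ^ A = (α * α⁻¹) * (α * α⁻¹) ^ A * α⁻¹ := by ring
        _ = α⁻¹ := by rw [h1]; ring
    linear_combination (-(θ⁻¹ * θ⁻¹ ^ A * α⁻¹ ^ B * c ^ n * z * z ^ A * z ^ B * z ^ n)) * hk
  · rw [if_neg (not_lt.2 hz), ENNReal.ofReal_zero]
    have hzero : (fun x => gammaPDF ((A+1 : ℕ) : ℝ) θ⁻¹ x * gammaPDF ((B+1 : ℕ) : ℝ) α⁻¹ (z - x))
        =ᵐ[volume] 0 := by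
      filter_upwards [h0] with x hx
      rcases lt_or_ge x 0 with h | h
      · simp [gammaPDF_of_neg h]
      · have hx' : 0 < x := h.lt_of_ne (Ne.symm hx)
        have : z - x < 0 := by linarith
        simp [gammaPDF_of_neg this]
    rw [lintegral_congr_ae hzero]
    simp


/-- If `X ~ Gamma(a, θ)` and `Y ~ Gamma(b, α)` are independent with integer shapes
`a, b ≥ 1` and scales `θ, α > 0`, then the density of `X + Y` at `z > 0` equals
`(α/θ)^a (1/α)^{a+b} z^{a+b-1} e^{-z/α} / Γ(a+b) · ₁F₁(a; a+b; z(1/α - 1/θ))`. -/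
theorem stmt_19 {Ω : Type*} [MeasurableSpace Ω] (μ : Measure Ω) [IsProbabilityMeasure μ]
    (a b : ℕ) (ha : 1 ≤ a) (hb : 1 ≤ b) (θ α : ℝ) (hθ : 0 < θ) (hα : 0 < α)
    (X Y : Ω → ℝ) (hXm : Measurable X) (hYm : Measurable Y)
    (hX : Measure.map X μ = gammaMeasure a θ⁻¹)
    (hY : Measure.map Y μ = gammaMeasure b α⁻¹)
    (hindep : IndepFun X Y μ) :
    Measure.map (fun ω => X ω + Y ω) μ
      = volume.withDensity (fun z =>
          ENNReal.ofReal (if 0 < z then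
            (α / θ) ^ a * (1 / α) ^ (a + b) * z ^ (a + b - 1) * Real.exp (-z / α) /
                Real.Gamma (a + b) *
              kummer1F1 a (a + b) (z * (1 / α - 1 / θ))
          else 0)) := by
  obtain ⟨A, rfl⟩ : ∃ A, a = A + 1 := ⟨a - 1, by omega⟩
  obtain ⟨B, rfl⟩ : ∃ B, b = B + 1 := ⟨b - 1, by omega⟩
  have hpair := (ProbabilityTheory.indepFun_iff_map_prod_eq_prod_map_map
    hXm.aemeasurable hYm.aemeasurable).mp hindep
  have h1 : Measure.map (fun ω => X ω + Y ω) μ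
      = Measure.map (fun p : ℝ × ℝ => p.1 + p.2) (Measure.map (fun ω => (X ω, Y ω)) μ) :=
    (Measure.map_map measurable_add (hXm.prodMk hYm)).symm
  rw [h1, hpair, hX, hY]
  have h2 : Measure.map (fun p : ℝ × ℝ => p.1 + p.2)
        ((gammaMeasure (↑(A+1)) θ⁻¹).prod (gammaMeasure (↑(B+1)) α⁻¹))
      = (volume.withDensity (gammaPDF (↑(A+1)) θ⁻¹)).conv
          (volume.withDensity (gammaPDF (↑(B+1)) α⁻¹)) := rfl
  have hmf : Measurable (gammaPDF (↑(A+1)) θ⁻¹) := (measurable_gammaPDFReal _ _).ennreal_ofReal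
  have hmg : Measurable (gammaPDF (↑(B+1)) α⁻¹) := (measurable_gammaPDFReal _ _).ennreal_ofReal
  rw [h2, conv_withDensity (gammaPDF (↑(A+1)) θ⁻¹) (gammaPDF (↑(B+1)) α⁻¹) hmf hmg]
  refine withDensity_congr_ae (Filter.Eventually.of_forall fun z => ?_)
  have := gamma_density_pt A B hθ hα z
  convert this using 3
end
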